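/- The algebra endomorphism ι of Ω_x ⊗ Ω_y determined by ι(f ⊗ 1) = f(x₁,x₂,...,y₁,y₂,...) and ι(1 ⊗ g) = g(x₁,x₂,...,-y₁,-y₂,...) is an automorphism, and it satisfies ι(Q_λ(x) Q_μ(y)) = Q_λ(x,y) Q_μ(x,-y) for all strict partitions λ, μ, as well as ι(p_r(x,y)) = 2 p_r(x) and ι(p_r(x,-y)) = 2 p_r(y) for every odd r. -/
import Mathlib

noncomputable section
/-- Index type for the odd power sums. -/
abbrev OddIdx := {r : ℕ // Odd r}

/-- The ring `Ω` of symmetric functions generated by the odd power sums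
`p_1, p_3, p_5, …` (which are algebraically independent, so `Ω` is a polynomial
ring on variables `X r`, `r` odd, with `X r = p_r`). -/
abbrev Omega := MvPolynomial OddIdx ℂ

/-- The power sum `p_r ∈ Ω` for odd `r` (junk value `0` for even `r`). -/
def pOdd (r : ℕ) : Omega :=
  if h : Odd r then MvPolynomial.X ⟨r, h⟩ else 0

/-- `p_κ = ∏ᵢ p_{κᵢ}` for a partition `κ` with odd parts. -/
def pPart {m : ℕ} (κ : Nat.Partition m) : Omega :=
  (κ.parts.map pOdd).prod

/-- The standard quantity `z_κ = ∏ i^{mᵢ(κ)} mᵢ(κ)!`. -/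
def zPart {m : ℕ} (κ : Nat.Partition m) : ℕ :=
  κ.parts.prod * ((κ.parts.dedup).map (fun i => Nat.factorial (Multiset.count i κ.parts))).prod

/-- The symmetric function `q_r ∈ Ω`, defined by
`∏ᵢ (1+xᵢt)/(1-xᵢt) = ∑ q_r t^r`; explicitly
`q_r = ∑_{κ ∈ OP_r} 2^{ℓ(κ)} z_κ⁻¹ p_κ`. -/
def qFun (r : ℕ) : Omega :=
  ∑ κ ∈ Nat.Partition.odds r,
    ((2 ^ (Multiset.card κ.parts) / (zPart κ : ℂ)) : ℂ) • pPart κ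

/-- Schur's `Q`-function `Q_{(r,s)}` for a two-row strict partition `r > s ≥ 0`:
`Q_{(r,s)} = q_r q_s + 2 ∑_{i=1}^{s} (-1)^i q_{r+i} q_{s-i}`. -/
def Qtwo (r s : ℕ) : Omega :=
  qFun r * qFun s + 2 • ∑ i ∈ Finset.Icc 1 s, ((-1 : ℂ) ^ i) • (qFun (r + i) * qFun (s - i))

/-- The Pfaffian of a `2m × 2m` (skew-symmetric) matrix with entries in `Ω`:
`Pf A = (2^m m!)⁻¹ ∑_{σ ∈ S_{2m}} sgn(σ) ∏ᵢ A_{σ(2i-1) σ(2i)}`. -/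
def pfaff (m : ℕ) (Aent : Fin (2 * m) → Fin (2 * m) → Omega) : Omega :=
  ((2 ^ m * Nat.factorial m : ℂ))⁻¹ •
    ∑ σ : Equiv.Perm (Fin (2 * m)),
      (((Equiv.Perm.sign σ : ℤ) : ℂ)) •
        ∏ i : Fin m,
          Aent (σ ⟨2 * (i : ℕ), by omega⟩) (σ ⟨2 * (i : ℕ) + 1, by omega⟩)

/-- Schur's `Q`-function `Q_λ ∈ Ω` for a strict partition `λ`, via Schur's
Pfaffian formula `Q_λ = Pf(Q_{(λᵢ,λⱼ)})_{i<j}` (with `λ` sorted decreasingly and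
padded by one zero part if `ℓ(λ)` is odd). -/
def Qsf {n : ℕ} (l : Nat.Partition n) : Omega :=
  let L : List ℕ := (l.parts.sort (· ≤ ·)).reverse
  pfaff ((L.length + 1) / 2) (fun i j =>
    if (i : ℕ) < (j : ℕ) then Qtwo (L.getD i 0) (L.getD j 0)
    else if (j : ℕ) < (i : ℕ) then - Qtwo (L.getD j 0) (L.getD i 0)
    else 0)

/-- The ring `Ω_x ⊗ Ω_y`, realized as polynomials in two families of odd power
sums (`Sum.inl r ↦ p_r(x)`, `Sum.inr r ↦ p_r(y)`). -/
abbrev OmegaXY := MvPolynomial (OddIdx ⊕ OddIdx) ℂ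

/-- `f ↦ f(x) ⊗ 1`. -/
def inX : Omega →ₐ[ℂ] OmegaXY := MvPolynomial.rename Sum.inl

/-- `g ↦ 1 ⊗ g(y)`. -/
def inY : Omega →ₐ[ℂ] OmegaXY := MvPolynomial.rename Sum.inr

/-- Evaluation on the union of the variable sets: `f ↦ f(x, y)`.  On the
generators it is `p_r ↦ p_r(x) + p_r(y) = p_r(x, y)`. -/
def toXY : Omega →ₐ[ℂ] OmegaXY :=
  MvPolynomial.aeval (fun r : OddIdx =>
    (MvPolynomial.X (Sum.inl r) + MvPolynomial.X (Sum.inr r) : OmegaXY))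

/-- Evaluation on `x ∪ (-y)`: `f ↦ f(x, -y)`.  On the generators it is
`p_r ↦ p_r(x) - p_r(y) = p_r(x, -y)` (for odd `r`). -/
def toXnegY : Omega →ₐ[ℂ] OmegaXY :=
  MvPolynomial.aeval (fun r : OddIdx =>
    (MvPolynomial.X (Sum.inl r) - MvPolynomial.X (Sum.inr r) : OmegaXY))

/-- The algebra endomorphism `ι` of `Ω_x ⊗ Ω_y` with `ι(f ⊗ 1) = f(x, y)` and
`ι(1 ⊗ g) = g(x, -y)`; on the polynomial generators (the odd power sums) it is
`p_r(x) ↦ p_r(x) + p_r(y)` and `p_r(y) ↦ p_r(x) - p_r(y)`. -/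
def iotaMap : OmegaXY →ₐ[ℂ] OmegaXY :=
  MvPolynomial.aeval (Sum.elim
    (fun r : OddIdx => (MvPolynomial.X (Sum.inl r) + MvPolynomial.X (Sum.inr r) : OmegaXY))
    (fun r : OddIdx => (MvPolynomial.X (Sum.inl r) - MvPolynomial.X (Sum.inr r) : OmegaXY)))

lemma Chalf2 : (MvPolynomial.C (1/2 : ℂ) : OmegaXY) * 2 = 1 := by
  rw [show ((2 : OmegaXY) = MvPolynomial.C (2 : ℂ)) by rw [map_ofNat], ← map_mul]
  norm_num

/-- Explicit inverse of `ι`. -/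
def jMap : OmegaXY →ₐ[ℂ] OmegaXY :=
  MvPolynomial.aeval (Sum.elim
    (fun r : OddIdx => (MvPolynomial.C (1/2 : ℂ) *
      (MvPolynomial.X (Sum.inl r) + MvPolynomial.X (Sum.inr r)) : OmegaXY))
    (fun r : OddIdx => (MvPolynomial.C (1/2 : ℂ) *
      (MvPolynomial.X (Sum.inl r) - MvPolynomial.X (Sum.inr r)) : OmegaXY)))

lemma iota_j : iotaMap.comp jMap = AlgHom.id ℂ OmegaXY := by
  apply MvPolynomial.algHom_ext
  rintro (r | r) <;>
    · simp [iotaMap, jMap, MvPolynomial.aeval_X]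
      ring_nf
      rw [mul_right_comm, Chalf2, one_mul]

lemma j_iota : jMap.comp iotaMap = AlgHom.id ℂ OmegaXY := by
  apply MvPolynomial.algHom_ext
  rintro (r | r) <;>
    · simp [iotaMap, jMap, MvPolynomial.aeval_X]
      ring_nf
      rw [mul_right_comm, Chalf2, one_mul]

lemma iota_inX (f : Omega) : iotaMap (inX f) = toXY f := by
  show (iotaMap.comp inX) f = toXY f
  congr 1
  apply MvPolynomial.algHom_ext
  intro r
  simp [iotaMap, inX, toXY, MvPolynomial.aeval_X]

lemma iota_inY (f : Omega) : iotaMap (inY f) = toXnegY f := by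
  show (iotaMap.comp inY) f = toXnegY f
  congr 1
  apply MvPolynomial.algHom_ext
  intro r
  simp [iotaMap, inY, toXnegY, MvPolynomial.aeval_X]

/-- `ι` is an automorphism of `Ω_x ⊗ Ω_y`, it satisfies
`ι(Q_λ(x) Q_μ(y)) = Q_λ(x,y) Q_μ(x,-y)` for all strict partitions `λ, μ`, and
`ι(p_r(x,y)) = 2 p_r(x)`, `ι(p_r(x,-y)) = 2 p_r(y)` for every odd `r`. -/
theorem stmt16 :
    Function.Bijective iotaMap ∧
    (∀ (p q : ℕ) (l : Nat.Partition p) (m : Nat.Partition q),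
      l.parts.Nodup → m.parts.Nodup →
      iotaMap (inX (Qsf l) * inY (Qsf m)) = toXY (Qsf l) * toXnegY (Qsf m)) ∧
    (∀ r : OddIdx,
      iotaMap (MvPolynomial.X (Sum.inl r) + MvPolynomial.X (Sum.inr r)) =
        2 * MvPolynomial.X (Sum.inl r) ∧
      iotaMap (MvPolynomial.X (Sum.inl r) - MvPolynomial.X (Sum.inr r)) =
        2 * MvPolynomial.X (Sum.inr r)) := by
  refine ⟨?_, ?_, ?_⟩
  · have h1 : ∀ x, jMap (iotaMap x) = x := fun x => by
      have := DFunLike.congr_fun j_iota x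
      simpa using this
    have h2 : ∀ x, iotaMap (jMap x) = x := fun x => by
      have := DFunLike.congr_fun iota_j x
      simpa using this
    exact Function.bijective_iff_has_inverse.mpr ⟨jMap, h1, h2⟩
  · intro p q l m _ _
    rw [map_mul, iota_inX, iota_inY]
  · intro r
    constructor <;> simp [iotaMap, MvPolynomial.aeval_X] <;> ring
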